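/- Let M ∈ ℝ and assume that 2M·I − (γ/h) ∑_{j=1}^J [L_j, L_jᴴ] is positive semidefinite. Then for every t ≥ 0 and every A ∈ M_d(ℂ): ‖exp(tℒ)(A)‖ ≤ e^{Mt} ‖A‖, where exp(tℒ) denotes the exponential of the linear operator tℒ acting on M_d(ℂ). -/

import Mathlib

open Matrix
open scoped BigOperators ComplexOrder

attribute [local instance] Matrix.frobeniusNormedAddCommGroup Matrix.frobeniusNormedSpace

/-- The Lindbladian `ℒA = (i/h)[P,A] + (γ/h) ∑ⱼ (LⱼALⱼᴴ − ½(LⱼᴴLⱼA + ALⱼᴴLⱼ))`. -/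
noncomputable def Lindbladian {d J : ℕ} (h γ : ℝ) (P : Matrix (Fin d) (Fin d) ℂ)
    (L : Fin J → Matrix (Fin d) (Fin d) ℂ) (A : Matrix (Fin d) (Fin d) ℂ) :
    Matrix (Fin d) (Fin d) ℂ :=
  (Complex.I / (h : ℂ)) • (P * A - A * P)
    + ((γ / h : ℝ) : ℂ) • ∑ j, (L j * A * (L j)ᴴ
        - (1 / 2 : ℂ) • ((L j)ᴴ * L j * A + A * ((L j)ᴴ * L j)))

/-- The adjoint Lindbladian
`ℒ*B = −(i/h)[P,B] + (γ/h) ∑ⱼ (LⱼᴴBLⱼ − ½(LⱼᴴLⱼB + BLⱼᴴLⱼ))`. -/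
noncomputable def LindbladianAdj {d J : ℕ} (h γ : ℝ) (P : Matrix (Fin d) (Fin d) ℂ)
    (L : Fin J → Matrix (Fin d) (Fin d) ℂ) (B : Matrix (Fin d) (Fin d) ℂ) :
    Matrix (Fin d) (Fin d) ℂ :=
  -(Complex.I / (h : ℂ)) • (P * B - B * P)
    + ((γ / h : ℝ) : ℂ) • ∑ j, ((L j)ᴴ * B * L j
        - (1 / 2 : ℂ) • ((L j)ᴴ * L j * B + B * ((L j)ᴴ * L j)))


/-- The Hilbert–Schmidt norm `‖A‖ = (tr(AAᴴ))^{1/2}`. -/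
noncomputable def hsNorm {d : ℕ} (A : Matrix (Fin d) (Fin d) ℂ) : ℝ :=
  Real.sqrt (((A * Aᴴ).trace).re)

/-! Along the orbit `B t = exp(tℒ) A` one has `d/dt ‖B‖² = 2 Re tr(ℒ(B) Bᴴ)`. The Hamiltonian
part contributes nothing, since `tr([P, B] Bᴴ)` is real. For each jump operator, Cauchy–Schwarz
for `⟪BL, LB⟫` bounds the dissipator's contribution by `½ Re tr(B [L, Lᴴ] Bᴴ)`, so the positivity
hypothesis gives `d/dt ‖B‖² ≤ 2M ‖B‖²`, and Grönwall's inequality concludes. -/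

open RCLike

theorem norm_le_exp_mul_norm_of_inner_deriv_le {E : Type*} [NormedAddCommGroup E]
    [InnerProductSpace ℝ E] {f f' : ℝ → E} {M t : ℝ} (hf : ∀ s, HasDerivAt f (f' s) s)
    (hdiss : ∀ s, inner ℝ (f' s) (f s) ≤ M * ‖f s‖ ^ 2) (ht : 0 ≤ t) :
    ‖f t‖ ≤ Real.exp (M * t) * ‖f 0‖ := by
  have hsq : ∀ s, HasDerivAt (‖f ·‖ ^ 2) (2 * inner ℝ (f s) (f' s)) s :=
    fun s => (hf s).norm_sq
  have hgron := le_gronwallBound_of_liminf_deriv_right_le (f := (‖f ·‖ ^ 2)) (K := 2 * M)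
    (ε := 0) (a := 0) (b := t)
    (fun s _ => (hsq s).continuousAt.continuousWithinAt)
    (fun s _ r hr => (hsq s).hasDerivWithinAt.liminf_right_slope_le hr) le_rfl
    (fun s _ => by rw [real_inner_comm]; linarith [hdiss s]) t ⟨ht, le_rfl⟩
  rw [sub_zero, gronwallBound_ε0] at hgron
  calc ‖f t‖ = √(‖f t‖ ^ 2) := (Real.sqrt_sq (norm_nonneg _)).symm
    _ ≤ √(‖f 0‖ ^ 2 * Real.exp (2 * M * t)) := Real.sqrt_le_sqrt hgron
    _ = Real.exp (M * t) * ‖f 0‖ := by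
      rw [show 2 * M * t = M * t + M * t by ring, Real.exp_add, ← sq, ← mul_pow,
        Real.sqrt_sq (by positivity), mul_comm]

theorem hasDerivAt_exp_ofReal_smul_apply {E : Type*} [NormedAddCommGroup E]
    [NormedSpace ℂ E] [CompleteSpace E] (T : E →L[ℂ] E) (x : E) (s : ℝ) :
    HasDerivAt (fun u : ℝ => NormedSpace.exp ((u : ℂ) • T) x)
      (T (NormedSpace.exp ((s : ℂ) • T) x)) s := by
  have hexp : HasDerivAt (fun u : ℝ => NormedSpace.exp ((u : ℂ) • T))
      ((1 : ℂ) • (T * NormedSpace.exp ((s : ℂ) • T))) s :=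
    (hasDerivAt_exp_smul_const' T (s : ℂ)).scomp_of_eq s Complex.ofRealCLM.hasDerivAt rfl
  rw [one_smul] at hexp
  exact ((ContinuousLinearMap.apply ℂ E x).restrictScalars ℝ).hasFDerivAt.comp_hasDerivAt s hexp

namespace Matrix

variable {𝕜 m n : Type*} [RCLike 𝕜] [Fintype m] [Fintype n]

/-- The Frobenius norm is by definition the norm of this nested `PiLp 2`, so matrices inherit its
(Hilbert–Schmidt) inner product. -/
def frobeniusToLp : Matrix m n 𝕜 →ₗᵢ[𝕜] PiLp 2 (fun _ : m => EuclideanSpace 𝕜 n) where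
  toFun A := WithLp.toLp 2 fun i => WithLp.toLp 2 (A i)
  map_add' _ _ := rfl
  map_smul' _ _ := rfl
  norm_map' _ := rfl

@[simp] lemma frobeniusToLp_apply (A : Matrix m n 𝕜) (i : m) (j : n) :
    frobeniusToLp A i j = A i j := rfl

lemma inner_frobeniusToLp (A B : Matrix m n 𝕜) :
    inner 𝕜 (frobeniusToLp A) (frobeniusToLp B) = (B * Aᴴ).trace := by
  simp [PiLp.inner_apply, trace, mul_apply]

lemma real_inner_frobeniusToLp (A B : Matrix m n ℂ) :
    inner ℝ (frobeniusToLp A) (frobeniusToLp B) = (A * Bᴴ).trace.re := by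
  simp [PiLp.inner_apply, Complex.inner, trace, mul_apply, Complex.re_sum, mul_comm]

lemma frobenius_norm_sq_eq_re_trace (A : Matrix m n 𝕜) : ‖A‖ ^ 2 = re (A * Aᴴ).trace := by
  rw [← frobeniusToLp.norm_map, @norm_sq_eq_re_inner 𝕜, inner_frobeniusToLp]

lemma re_trace_mul_conjTranspose_le (X Y : Matrix m n 𝕜) :
    re (X * Yᴴ).trace ≤ (re (X * Xᴴ).trace + re (Y * Yᴴ).trace) / 2 := by
  have h := re_inner_le_norm (𝕜 := 𝕜) (frobeniusToLp Y) (frobeniusToLp X)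
  rw [inner_frobeniusToLp, frobeniusToLp.norm_map, frobeniusToLp.norm_map] at h
  nlinarith [frobenius_norm_sq_eq_re_trace X, frobenius_norm_sq_eq_re_trace Y,
    sq_nonneg (‖X‖ - ‖Y‖)]

lemma IsHermitian.im_trace_mul {P Q : Matrix n n 𝕜} (hP : P.IsHermitian) (hQ : Q.IsHermitian) :
    im (P * Q).trace = 0 := by
  rw [← conj_eq_iff_im, ← star_def, ← trace_conjTranspose, conjTranspose_mul, hP.eq, hQ.eq,
    trace_mul_comm]

lemma IsHermitian.im_trace_commutator_mul_conjTranspose {P : Matrix n n 𝕜} (hP : P.IsHermitian)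
    (B : Matrix n n 𝕜) : im ((P * B - B * P) * Bᴴ).trace = 0 := by
  have hcycle : ((P * B - B * P) * Bᴴ).trace = (P * (B * Bᴴ)).trace - (P * (Bᴴ * B)).trace := by
    rw [sub_mul, trace_sub, mul_assoc, mul_assoc, trace_mul_comm B, mul_assoc]
  rw [hcycle, map_sub, hP.im_trace_mul (isHermitian_mul_conjTranspose_self B),
    hP.im_trace_mul (isHermitian_conjTranspose_mul_self B), sub_zero]

lemma re_trace_dissipator_mul_conjTranspose_le (K B : Matrix n n 𝕜) :
    re ((K * B * Kᴴ - (1 / 2 : 𝕜) • (Kᴴ * K * B + B * (Kᴴ * K))) * Bᴴ).trace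
      ≤ re (B * (K * Kᴴ - Kᴴ * K) * Bᴴ).trace / 2 := by
  have hcs := re_trace_mul_conjTranspose_le (K * B) (B * K)
  have hcross : (K * B * (B * K)ᴴ).trace = (K * B * Kᴴ * Bᴴ).trace := by
    simp only [conjTranspose_mul, mul_assoc]
  have hKB : (K * B * (K * B)ᴴ).trace = (Kᴴ * K * B * Bᴴ).trace := by
    rw [conjTranspose_mul, ← mul_assoc, trace_mul_comm, ← mul_assoc, ← mul_assoc]
  have hBK : (B * K * (B * K)ᴴ).trace = (B * (K * Kᴴ) * Bᴴ).trace := by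
    simp only [conjTranspose_mul, mul_assoc]
  have hhalf : (1 / 2 : 𝕜) = ((1 / 2 : ℝ) : 𝕜) := by push_cast; rfl
  rw [hcross, hKB, hBK] at hcs
  simp only [sub_mul, add_mul, mul_sub, smul_mul_assoc, trace_sub, trace_add, trace_smul, hhalf,
    smul_eq_mul, re_ofReal_mul, map_sub, map_add]
  linarith

end Matrix

theorem hsNorm_eq_norm {d : ℕ} (A : Matrix (Fin d) (Fin d) ℂ) : hsNorm A = ‖A‖ := by
  rw [hsNorm, ← RCLike.re_to_complex, ← frobenius_norm_sq_eq_re_trace,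
    Real.sqrt_sq (norm_nonneg _)]

theorem re_trace_lindbladian_mul_conjTranspose_le {d J : ℕ} {h γ M : ℝ} (hh : 0 < h)
    (hγ : 0 ≤ γ) {P : Matrix (Fin d) (Fin d) ℂ} (hP : P.IsHermitian)
    {L : Fin J → Matrix (Fin d) (Fin d) ℂ}
    (hM : (((2 * M : ℝ) : ℂ) • (1 : Matrix (Fin d) (Fin d) ℂ)
        - ((γ / h : ℝ) : ℂ) • ∑ j, (L j * (L j)ᴴ - (L j)ᴴ * L j)).PosSemidef)
    (B : Matrix (Fin d) (Fin d) ℂ) :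
    (Lindbladian h γ P L B * Bᴴ).trace.re ≤ M * (B * Bᴴ).trace.re := by
  set c : ℝ := γ / h
  set S := ∑ j, (L j * (L j)ᴴ - (L j)ᴴ * L j)
  set D : Fin J → Matrix (Fin d) (Fin d) ℂ := fun j => L j * B * (L j)ᴴ
    - (1 / 2 : ℂ) • ((L j)ᴴ * L j * B + B * ((L j)ᴴ * L j))
  have hsplit : (Lindbladian h γ P L B * Bᴴ).trace
      = Complex.I / h * ((P * B - B * P) * Bᴴ).trace + c * ∑ j, (D j * Bᴴ).trace := by
    simp only [Lindbladian, add_mul, smul_mul_assoc, trace_add, trace_smul, Finset.sum_mul,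
      trace_sum, smul_eq_mul, D, c]
  have hham : (Complex.I / h * ((P * B - B * P) * Bᴴ).trace).re = 0 := by
    have hreal := hP.im_trace_commutator_mul_conjTranspose B
    rw [RCLike.im_to_complex] at hreal
    simp [Complex.mul_re, Complex.div_re, hreal]
  have hjump : ∑ j, (D j * Bᴴ).trace.re ≤ (B * S * Bᴴ).trace.re / 2 := by
    calc ∑ j, (D j * Bᴴ).trace.re
        ≤ ∑ j, (B * (L j * (L j)ᴴ - (L j)ᴴ * L j) * Bᴴ).trace.re / 2 :=
          Finset.sum_le_sum fun j _ => re_trace_dissipator_mul_conjTranspose_le (L j) B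
      _ = (B * S * Bᴴ).trace.re / 2 := by
          simp only [S, Finset.mul_sum, Finset.sum_mul, trace_sum, Complex.re_sum, Finset.sum_div]
  have hpsd : 0 ≤ 2 * M * (B * Bᴴ).trace.re - c * (B * S * Bᴴ).trace.re := by
    have := (Complex.nonneg_iff.mp (hM.mul_mul_conjTranspose_same B).trace_nonneg).1
    simpa only [mul_sub, sub_mul, mul_smul_comm, smul_mul_assoc, mul_one, trace_sub, trace_smul,
      smul_eq_mul, Complex.sub_re, Complex.re_ofReal_mul] using this
  have hc : 0 ≤ c := div_nonneg hγ hh.le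
  rw [hsplit, Complex.add_re, hham, Complex.re_ofReal_mul, Complex.re_sum]
  linarith [mul_le_mul_of_nonneg_left hjump hc]

theorem lindbladian_semigroup_bound_general (d J : ℕ) (h γ : ℝ)
    (hh : 0 < h) (hγ : 0 ≤ γ) (P : Matrix (Fin d) (Fin d) ℂ) (hP : P.IsHermitian)
    (L : Fin J → Matrix (Fin d) (Fin d) ℂ) (M : ℝ)
    (hM : (((2 * M : ℝ) : ℂ) • (1 : Matrix (Fin d) (Fin d) ℂ)
        - ((γ / h : ℝ) : ℂ) • ∑ j, (L j * (L j)ᴴ - (L j)ᴴ * L j)).PosSemidef)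
    (𝓛 : Matrix (Fin d) (Fin d) ℂ →ₗ[ℂ] Matrix (Fin d) (Fin d) ℂ)
    (h𝓛 : ∀ A, 𝓛 A = Lindbladian h γ P L A)
    (t : ℝ) (ht : 0 ≤ t) (A : Matrix (Fin d) (Fin d) ℂ) :
    hsNorm (NormedSpace.exp ((t : ℂ) • @LinearMap.toContinuousLinearMap ℂ _ _ _ _
      PseudoMetricSpace.toUniformSpace.toTopologicalSpace _ _ _ _ _
      PseudoMetricSpace.toUniformSpace.toTopologicalSpace _ _ _ _ _ 𝓛) A)
      ≤ Real.exp (M * t) * hsNorm A := by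
  set T := @LinearMap.toContinuousLinearMap ℂ _ _ _ _
    PseudoMetricSpace.toUniformSpace.toTopologicalSpace _ _ _ _ _
    PseudoMetricSpace.toUniformSpace.toTopologicalSpace _ _ _ _ _ 𝓛
  have hT : ∀ X, T X = Lindbladian h γ P L X := h𝓛
  set B : ℝ → Matrix (Fin d) (Fin d) ℂ := fun u => NormedSpace.exp ((u : ℂ) • T) A
  have hB : ∀ s, HasDerivAt (fun u => frobeniusToLp (B u))
      (frobeniusToLp (Lindbladian h γ P L (B s))) s := fun s => by
    rw [← hT]
    exact ((frobeniusToLp (𝕜 := ℂ)).toContinuousLinearMap.restrictScalars ℝ).hasFDerivAt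
      |>.comp_hasDerivAt s (hasDerivAt_exp_ofReal_smul_apply T A s)
  have key := norm_le_exp_mul_norm_of_inner_deriv_le hB (fun s => by
    rw [real_inner_frobeniusToLp, frobeniusToLp.norm_map, frobenius_norm_sq_eq_re_trace,
      RCLike.re_to_complex]
    exact re_trace_lindbladian_mul_conjTranspose_le hh hγ hP hM (B s)) ht
  simpa [frobeniusToLp.norm_map, hsNorm_eq_norm, B] using key

/-- Proposition 4.6 (finite-dimensional instance): if `(γ/h) ∑ⱼ [Lⱼ,Lⱼᴴ] ≤ 2M`, then the
semigroup `exp(tℒ)` generated by the Lindbladian satisfies `‖exp(tℒ)A‖ ≤ e^{Mt}‖A‖` in the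
Hilbert–Schmidt norm for all `t ≥ 0`. -/
theorem lindbladian_semigroup_bound (d J : ℕ) (hd : 1 ≤ d) (hJ : 1 ≤ J) (h γ : ℝ)
    (hh : 0 < h) (hγ : 0 ≤ γ) (P : Matrix (Fin d) (Fin d) ℂ) (hP : P.IsHermitian)
    (L : Fin J → Matrix (Fin d) (Fin d) ℂ) (M : ℝ)
    (hM : (((2 * M : ℝ) : ℂ) • (1 : Matrix (Fin d) (Fin d) ℂ)
        - ((γ / h : ℝ) : ℂ) • ∑ j, (L j * (L j)ᴴ - (L j)ᴴ * L j)).PosSemidef)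
    (𝓛 : Matrix (Fin d) (Fin d) ℂ →ₗ[ℂ] Matrix (Fin d) (Fin d) ℂ)
    (h𝓛 : ∀ A, 𝓛 A = Lindbladian h γ P L A)
    (t : ℝ) (ht : 0 ≤ t) (A : Matrix (Fin d) (Fin d) ℂ) :
    hsNorm (NormedSpace.exp ((t : ℂ) • @LinearMap.toContinuousLinearMap ℂ _ _ _ _
      PseudoMetricSpace.toUniformSpace.toTopologicalSpace _ _ _ _ _
      PseudoMetricSpace.toUniformSpace.toTopologicalSpace _ _ _ _ _ 𝓛) A)
      ≤ Real.exp (M * t) * hsNorm A :=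
  lindbladian_semigroup_bound_general d J h γ hh hγ P hP L M hM 𝓛 h𝓛 t ht A
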